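/- arXiv:2410.23240 — 2 statements merged into one kernel-verified Lean document; each statement's English description precedes it below -/
import Mathlib

section
/- For any odd integer l with 1 ≤ l < p, we have g̃_l(n) ≥ n for all 1 ≤ n ≤ p; moreover there exists an integer m with 0 ≤ m ≤ p such that g̃_l(n) > n for all 1 ≤ n ≤ m and g̃_l(n) = n for all m < n ≤ p. In particular, g̃_l(p) = p. -/
/-!
While `0 < g̃_l(n) < p` both Legendre symbols are `±1`, so each step moves `g̃_l` by `±1` and
preserves the parity of `g̃_l(n) - n`, which is even at `n = 1` because `l` is odd. Hence
`g̃_l(n)` cannot jump over the diagonal: once `g̃_l(n) = n`, the increment is `(n/p)² = 1` and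
`g̃_l` follows the diagonal up to `p`; otherwise it stays strictly above it until it is absorbed
at `p`.
-/

/-- The (k,l)-Göbel sequence with values in ℚ: g 1 = l and
    (n+1) * g (n+1) = g n * (n + g n ^ (k-1)). -/
def gobel (k : ℕ) (l : ℚ) : ℕ → ℚ
  | 0 => 0
  | 1 => l
  | (n+2) => gobel k l (n+1) * (((n:ℚ)+1) + (gobel k l (n+1)) ^ (k-1)) / ((n:ℚ)+2)

/-- The auxiliary sequence g̃_l of Kobayashi–Seki. -/
def gtilde (p : ℕ) [Fact p.Prime] (l : ℕ) : ℕ → ℤ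
  | 0 => (l : ℤ)
  | 1 => (l : ℤ)
  | (n+2) =>
    let g := gtilde p l (n+1)
    if 0 < g ∧ g < (p : ℤ) then g + legendreSym p ((n:ℤ)+1) * legendreSym p g else g

/-- A rational number belongs to the localization ℤ_(p). -/
def inZp (p : ℕ) (x : ℚ) : Prop := ¬ (p ∣ x.den)

/-- Congruence modulo p inside ℤ_(p). -/
def modCongZp (p : ℕ) (x y : ℚ) : Prop :=
  ∃ z : ℚ, ¬ (p ∣ z.den) ∧ x - y = (p : ℚ) * z

lemma legendreSym_eq_one_or_neg_one_of_pos_of_lt {p : ℕ} [Fact p.Prime] {a : ℤ}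
    (h0 : 0 < a) (hp : a < p) : legendreSym p a = 1 ∨ legendreSym p a = -1 :=
  legendreSym.eq_one_or_neg_one p <| by
    rw [Ne, ZMod.intCast_zmod_eq_zero_iff_dvd]
    exact fun hd => (Int.le_of_dvd h0 hd).not_gt hp

section gtilde

variable {p : ℕ} [Fact p.Prime] {l n : ℕ}

lemma gtilde_succ (hn : 1 ≤ n) :
    gtilde p l (n + 1) =
      if 0 < gtilde p l n ∧ gtilde p l n < p then
        gtilde p l n + legendreSym p n * legendreSym p (gtilde p l n)
      else gtilde p l n := by
  obtain ⟨m, rfl⟩ : ∃ m, n = m + 1 := ⟨n - 1, by omega⟩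
  simp only [gtilde]
  push_cast
  rfl

lemma gtilde_succ_eq_of_eq_prime (hn : 1 ≤ n) (h : gtilde p l n = p) :
    gtilde p l (n + 1) = p := by
  rw [gtilde_succ hn, h, if_neg (fun hc => hc.2.ne rfl)]

lemma gtilde_succ_eq_add_one_or_sub_one (hn : 1 ≤ n) (hnp : n < p) (h0 : 0 < gtilde p l n)
    (hp : gtilde p l n < p) :
    gtilde p l (n + 1) = gtilde p l n + 1 ∨ gtilde p l (n + 1) = gtilde p l n - 1 := by
  rw [gtilde_succ hn, if_pos ⟨h0, hp⟩]
  rcases legendreSym_eq_one_or_neg_one_of_pos_of_lt (a := n) (by exact_mod_cast hn)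
      (by exact_mod_cast hnp) with h1 | h1 <;>
    rcases legendreSym_eq_one_or_neg_one_of_pos_of_lt h0 hp with h2 | h2 <;>
    simp [h1, h2, sub_eq_add_neg]

lemma gtilde_succ_eq_of_eq_self (hn : 1 ≤ n) (hnp : n < p) (h : gtilde p l n = n) :
    gtilde p l (n + 1) = n + 1 := by
  have hpos : (0 : ℤ) < n := by exact_mod_cast hn
  have hlt : (n : ℤ) < p := by exact_mod_cast hnp
  rw [gtilde_succ hn, h, if_pos ⟨hpos, hlt⟩]
  rcases legendreSym_eq_one_or_neg_one_of_pos_of_lt hpos hlt with h1 | h1 <;>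
    simp [h1]

theorem gtilde_bounds (hlodd : Odd l) (hl1 : 1 ≤ l) (hl2 : l < p) (hn : 1 ≤ n) (hnp : n ≤ p) :
    n ≤ gtilde p l n ∧ gtilde p l n ≤ p ∧ (gtilde p l n = p ∨ Even (gtilde p l n - n)) := by
  induction n, hn using Nat.le_induction with
  | base =>
    change (1 : ℤ) ≤ l ∧ (l : ℤ) ≤ p ∧ ((l : ℤ) = p ∨ Even ((l : ℤ) - 1))
    obtain ⟨k, rfl⟩ := hlodd
    refine ⟨by exact_mod_cast hl1, by exact_mod_cast hl2.le, Or.inr ⟨k, ?_⟩⟩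
    push_cast
    ring
  | succ n hn ih =>
    obtain ⟨hlow, hup, hpar⟩ := ih (by omega)
    have hnlt : n < p := by omega
    have hsucc_le : (n : ℤ) + 1 ≤ p := by exact_mod_cast hnp
    push_cast
    by_cases htop : gtilde p l n = p
    · rw [gtilde_succ_eq_of_eq_prime hn htop]
      exact ⟨hsucc_le, le_rfl, Or.inl rfl⟩
    obtain ⟨k, hk⟩ := hpar.resolve_left htop
    by_cases hdiag : gtilde p l n = n
    · rw [gtilde_succ_eq_of_eq_self hn hnlt hdiag]
      exact ⟨le_rfl, hsucc_le, Or.inr ⟨0, by ring⟩⟩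
    -- `g̃_l(n) - n` is even and nonzero, so `g̃_l(n) ≥ n + 2`
    rcases gtilde_succ_eq_add_one_or_sub_one (l := l) hn hnlt (by omega) (by omega) with h | h <;>
      rw [h]
    · exact ⟨by omega, by omega, Or.inr ⟨k, by omega⟩⟩
    · exact ⟨by omega, by omega, Or.inr ⟨k - 1, by omega⟩⟩

lemma gtilde_eq_self_of_le {a : ℕ} (ha : 1 ≤ a) (hfix : gtilde p l a = a) (han : a ≤ n)
    (hnp : n ≤ p) : gtilde p l n = n := by
  induction n, han using Nat.le_induction with
  | base => exact hfix
  | succ n han ih =>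
    rw [gtilde_succ_eq_of_eq_self (by omega) (by omega) (ih (by omega))]
    push_cast
    rfl

end gtilde

theorem stmt2_general (p : ℕ) [Fact p.Prime] (l : ℕ) (hlodd : Odd l)
    (hl1 : 1 ≤ l) (hl2 : l < p) :
    (∀ n : ℕ, 1 ≤ n → n ≤ p → (n : ℤ) ≤ gtilde p l n) ∧
    (∃ m : ℕ, m ≤ p ∧ (∀ n : ℕ, 1 ≤ n → n ≤ m → (n : ℤ) < gtilde p l n) ∧
      (∀ n : ℕ, m < n → n ≤ p → gtilde p l n = (n : ℤ))) ∧
    gtilde p l p = (p : ℤ) := by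
  have hp1 : 1 ≤ p := (Fact.out : p.Prime).one_le
  have bounds := fun n (hn : 1 ≤ n) (hnp : n ≤ p) => gtilde_bounds hlodd hl1 hl2 hn hnp
  have hfix : gtilde p l p = p := by
    have := bounds p hp1 le_rfl
    omega
  have hex : ∃ n, 1 ≤ n ∧ n ≤ p ∧ gtilde p l n = n := ⟨p, hp1, le_rfl, hfix⟩
  obtain ⟨hm1, hmp, hmfix⟩ := Nat.find_spec hex
  refine ⟨fun n h1 h2 => (bounds n h1 h2).1, ⟨Nat.find hex - 1, by omega, ?_, ?_⟩, hfix⟩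
  · intro n h1 h2
    refine lt_of_le_of_ne (bounds n h1 (by omega)).1 fun h => ?_
    exact Nat.find_min hex (by omega : n < Nat.find hex) ⟨h1, by omega, h.symm⟩
  · exact fun n h1 h2 => gtilde_eq_self_of_le hm1 hmfix (by omega) h2

theorem stmt2 (p : ℕ) [Fact p.Prime] (hp2 : p ≠ 2) (l : ℕ) (hlodd : Odd l)
    (hl1 : 1 ≤ l) (hl2 : l < p) :
    (∀ n : ℕ, 1 ≤ n → n ≤ p → (n : ℤ) ≤ gtilde p l n) ∧
    (∃ m : ℕ, m ≤ p ∧ (∀ n : ℕ, 1 ≤ n → n ≤ m → (n : ℤ) < gtilde p l n) ∧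
      (∀ n : ℕ, m < n → n ≤ p → gtilde p l n = (n : ℤ))) ∧
    gtilde p l p = (p : ℤ) :=
  stmt2_general p l hlodd hl1 hl2
end

section
/- Let l be a non-negative even integer and s an integer with 0 ≤ s ≤ l such that gcd(2s+1, l+1) = 1. Then there exists a unique sequence (b_n)_{1≤n≤l+1} with values in {+1,-1}, extended (l+1)-periodically to all integers, satisfying: b_1 = 1; b_n = -b_{l+1-n} whenever n ≢ 0 (mod l+1); and b_{s-n} = b_{s+1+n} for all integers n. -/
/-!
With `m = l + 1` and `d = 2s + 1`, a unit modulo `m`, a periodic sequence is a function `β` on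
`ZMod m`, and the conditions read `β (-x) = -β x` for `x ≠ 0` and `β (d - x) = β x`. Combined they
give `β ((j + 1) d) = -β (j d)` for `j ≠ 0`, so `j ↦ β (j d)` alternates in sign along
`1, 2, …, m`; this determines `β` up to the sign `β d`, which `β 1 = 1` fixes. Conversely the
alternating pattern satisfies both conditions because `m` is odd.
-/

/-- The defining conditions of the (l+1)-periodic sequence (b_{l,s}(n)). -/
def IsB (l s : ℕ) (b : ℤ → ℤ) : Prop :=
  (∀ n : ℤ, b n = 1 ∨ b n = -1) ∧
  (∀ n : ℤ, b (n + ((l : ℤ) + 1)) = b n) ∧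
  b 1 = 1 ∧
  (∀ n : ℤ, ¬ ((l : ℤ) + 1) ∣ n → b n = - b ((l : ℤ) + 1 - n)) ∧
  (∀ n : ℤ, b ((s : ℤ) - n) = b ((s : ℤ) + 1 + n))

section AltSign

variable {m : ℕ}

/-- `(-1) ^ (k - 1)` for the representative `k ∈ {1, …, m}` of `x`. -/
def altSign (x : ZMod m) : ℤ := (-1) ^ (x - 1).val

lemma altSign_eq_one_or (x : ZMod m) : altSign x = 1 ∨ altSign x = -1 :=
  neg_one_pow_eq_or ℤ _

@[simp] lemma altSign_one : altSign (1 : ZMod m) = 1 := by simp [altSign]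

variable [NeZero m]

lemma ZMod.val_sub_one_of_ne_zero {x : ZMod m} (hx : x ≠ 0) : (x - 1).val = x.val - 1 := by
  have hpos := ZMod.val_pos.2 hx
  have h1 : (1 : ZMod m).val = 1 := by
    rw [ZMod.val_one_eq_one_mod, Nat.mod_eq_of_lt (by have := ZMod.val_lt x; omega)]
  rw [ZMod.val_sub (by omega), h1]

lemma altSign_add_one {x : ZMod m} (hx : x ≠ 0) : altSign (x + 1) = -altSign x := by
  have hpos := ZMod.val_pos.2 hx
  rw [altSign, altSign, add_sub_cancel_right, ZMod.val_sub_one_of_ne_zero hx,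
    ← Nat.sub_add_cancel hpos, pow_succ, Nat.add_sub_cancel]
  ring

lemma altSign_one_sub (hm : Odd m) (x : ZMod m) : altSign (1 - x) = altSign x := by
  rw [altSign, altSign, sub_sub_cancel_left]
  apply neg_one_pow_congr
  obtain ⟨k, rfl⟩ := hm
  rcases eq_or_ne x 0 with rfl | hx
  · have h : (-1 : ZMod (2 * k + 1)).val = 2 * k := ZMod.val_neg_one (2 * k)
    simp [h]
  · rw [ZMod.neg_val, if_neg hx, ZMod.val_sub_one_of_ne_zero hx]
    have := ZMod.val_lt x
    have := ZMod.val_pos.2 hx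
    simp only [Nat.even_iff]
    omega

lemma altSign_neg (hm : Odd m) {x : ZMod m} (hx : x ≠ 0) : altSign (-x) = -altSign x := by
  rw [← altSign_one_sub hm, sub_neg_eq_add, add_comm, altSign_add_one hx]

lemma eq_mul_altSign {γ : ZMod m → ℤ} (h : ∀ j ≠ 0, γ (j + 1) = -γ j) (j : ZMod m) :
    γ j = γ 1 * altSign j := by
  have key : ∀ k : ℕ, k < m → γ (k + 1) = γ 1 * altSign ((k : ZMod m) + 1) := by
    intro k hk
    induction k with
    | zero => simp
    | succ k ih =>
      have hk0 : ((k + 1 : ℕ) : ZMod m) ≠ 0 := by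
        rw [Ne, ZMod.natCast_eq_zero_iff]
        exact Nat.not_dvd_of_pos_of_lt k.succ_pos hk
      push_cast at hk0 ⊢
      rw [h _ hk0, altSign_add_one hk0, ih (by omega), mul_neg]
  simpa using key (j - 1).val (ZMod.val_lt _)

end AltSign

section SignPattern

variable {m : ℕ} (u : (ZMod m)ˣ)

def signPattern (x : ZMod m) : ℤ := altSign (↑u⁻¹ : ZMod m) * altSign (x * (↑u⁻¹ : ZMod m))

lemma signPattern_eq_one_or (x : ZMod m) : signPattern u x = 1 ∨ signPattern u x = -1 := by
  rcases altSign_eq_one_or (↑u⁻¹ : ZMod m) with h | h <;>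
    rcases altSign_eq_one_or (x * (↑u⁻¹ : ZMod m)) with h' | h' <;> simp [signPattern, h, h']

lemma signPattern_one : signPattern u 1 = 1 := by
  rcases altSign_eq_one_or (↑u⁻¹ : ZMod m) with h | h <;> simp [signPattern, h]

variable [NeZero m]

lemma signPattern_neg (hm : Odd m) {x : ZMod m} (hx : x ≠ 0) :
    signPattern u (-x) = -signPattern u x := by
  rw [signPattern, signPattern, neg_mul, altSign_neg hm ((Units.mul_left_eq_zero _).not.2 hx),
    mul_neg]

lemma signPattern_sub (hm : Odd m) (x : ZMod m) : signPattern u (u - x) = signPattern u x := by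
  rw [signPattern, signPattern, sub_mul, Units.mul_inv, altSign_one_sub hm]

lemma eq_signPattern {β : ZMod m → ℤ} (h1 : β 1 = 1) (hneg : ∀ x ≠ 0, β (-x) = -β x)
    (hrefl : ∀ x, β (u - x) = β x) : β = signPattern u := by
  have hstep : ∀ j ≠ 0, β ((j + 1) * (u : ZMod m)) = -β (j * u) := fun j hj => by
    rw [← hneg _ ((Units.mul_left_eq_zero u).not.2 hj), ← hrefl]
    ring_nf
  have hx : ∀ x, β x = β u * altSign (x * (↑u⁻¹ : ZMod m)) := fun x => by
    simpa [mul_assoc] using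
      eq_mul_altSign (γ := fun j => β (j * (u : ZMod m))) hstep (x * (↑u⁻¹ : ZMod m))
  have hu : β u = altSign (↑u⁻¹ : ZMod m) := by
    have := hx 1
    rw [h1, one_mul] at this
    rcases altSign_eq_one_or (↑u⁻¹ : ZMod m) with h | h <;> rw [h] at this ⊢ <;> linarith
  funext x
  rw [hx, hu, signPattern]

end SignPattern

lemma Function.Periodic.exists_eq_comp_intCast {α : Type*} {m : ℕ} {f : ℤ → α}
    (h : Function.Periodic f m) : ∃ β : ZMod m → α, f = β ∘ Int.cast :=
  ⟨fun x => f x.cast, funext fun n => by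
    simpa [ZMod.coe_intCast, Int.emod_def, mul_comm] using ((h.int_mul (n / m)).sub_eq n).symm⟩

lemma isB_comp_intCast_iff {l s : ℕ} (β : ZMod (l + 1) → ℤ) :
    IsB l s (β ∘ Int.cast) ↔ (∀ x, β x = 1 ∨ β x = -1) ∧ β 1 = 1 ∧
      (∀ x ≠ 0, β (-x) = -β x) ∧ ∀ x, β ((2 * s + 1 : ℕ) - x) = β x := by
  have hm : (((l : ℤ) + 1 : ℤ) : ZMod (l + 1)) = 0 := by exact_mod_cast ZMod.natCast_self (l + 1)
  simp only [IsB, Function.comp_apply, ZMod.intCast_surjective.forall, Int.cast_add, Int.cast_sub,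
    hm, add_zero, zero_sub, forall_const, true_and]
  refine and_congr Iff.rfl (and_congr Iff.rfl (and_congr ?_ ?_))
  · refine forall_congr' fun n => ?_
    rw [Ne, ZMod.intCast_zmod_eq_zero_iff_dvd, Int.eq_neg_comm]
    push_cast
    rfl
  · constructor
    · intro h x
      convert (h (s - x)).symm using 2 <;> push_cast <;> ring
    · intro h n
      convert h (s + 1 + n) using 2 <;> push_cast <;> ring

theorem stmt8_general (l s : ℕ) (hleven : Even l)
    (hg : Nat.gcd (2 * s + 1) (l + 1) = 1) :
    ∃ b : ℤ → ℤ, IsB l s b ∧ ∀ b' : ℤ → ℤ, IsB l s b' → b' = b := by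
  set u := ZMod.unitOfCoprime (2 * s + 1) hg
  have hu : ((2 * s + 1 : ℕ) : ZMod (l + 1)) = u := (ZMod.coe_unitOfCoprime _ hg).symm
  have hm : Odd (l + 1) := hleven.add_one
  refine ⟨signPattern u ∘ Int.cast, (isB_comp_intCast_iff _).2 ⟨signPattern_eq_one_or u,
    signPattern_one u, fun x => signPattern_neg u hm, hu ▸ signPattern_sub u hm⟩, fun b hb => ?_⟩
  have hper : Function.Periodic b ((l + 1 : ℕ) : ℤ) := by simpa using hb.2.1
  obtain ⟨β, rfl⟩ := hper.exists_eq_comp_intCast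
  obtain ⟨-, h1, hneg, hrefl⟩ := (isB_comp_intCast_iff β).1 hb
  rw [eq_signPattern u h1 hneg (hu ▸ hrefl)]

theorem stmt8 (l s : ℕ) (hleven : Even l) (hs : s ≤ l)
    (hg : Nat.gcd (2 * s + 1) (l + 1) = 1) :
    ∃ b : ℤ → ℤ, IsB l s b ∧ ∀ b' : ℤ → ℤ, IsB l s b' → b' = b :=
  stmt8_general l s hleven hg
end
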